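/- For 0 < α < 1 and a continuously differentiable function f on [0,∞) of exponential order, the Laplace transform of 𝔇_cos^α f(t) = (N(α)/(1-α)) ∫₀ᵗ cos((α/(1-α))(t-τ)) f'(τ) dτ equals (s(1-α) N(α) / ((1-α)² s² + α²)) · (s F(s) - f(0)). -/

import Mathlib

/-- Laplace transform of `g` at `s`. -/
noncomputable def laplace (g : ℝ → ℝ) (s : ℝ) : ℝ :=
  ∫ t in Set.Ioi (0:ℝ), Real.exp (-s * t) * g t

/-- The (DC) fractional operator. -/
noncomputable def DCop (N α : ℝ) (f : ℝ → ℝ) (t : ℝ) : ℝ :=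
  (N / (1 - α)) * ∫ τ in (0:ℝ)..t, Real.cos ((α/(1-α)) * (t - τ)) * deriv f τ

/-!
`DCop N α f` is `N / (1 - α)` times the Laplace convolution of `cos (K t)`, `K = α / (1 - α)`,
with `f'`. The exponential bounds make both Laplace integrals absolutely convergent, so the
convolution theorem (Fubini on the quadrant) applies, and the transform factors as
`L{cos (K t)} = s / (s² + K²)` (the real part of `L{e^{(-s + iK) t}}`) times
`L{f'} = s F(s) - f(0)` (the fundamental theorem of calculus for `e^{-st} f(t)`).
-/

open MeasureTheory Set Filter Topology Real

section ExponentialOrder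

variable {g : ℝ → ℝ} {M c s : ℝ}

lemma abs_exp_neg_mul_mul_le {t : ℝ} (hgt : |g t| ≤ M * exp (c * t)) :
    |exp (-s * t) * g t| ≤ M * exp (-(s - c) * t) := by
  rw [abs_mul, abs_exp]
  calc exp (-s * t) * |g t| ≤ exp (-s * t) * (M * exp (c * t)) := by gcongr
    _ = M * exp (-(s - c) * t) := by rw [mul_left_comm, ← exp_add]; ring_nf

theorem integrableOn_exp_neg_mul_mul_of_abs_le
    (hg : AEStronglyMeasurable g (volume.restrict (Ioi 0)))
    (hbound : ∀ t ≥ 0, |g t| ≤ M * exp (c * t)) (hcs : c < s) :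
    IntegrableOn (fun t => exp (-s * t) * g t) (Ioi 0) := by
  refine ((exp_neg_integrableOn_Ioi 0 (sub_pos.2 hcs)).const_mul M).mono'
    ((continuous_exp.comp (continuous_const.mul continuous_id)).aestronglyMeasurable.mul hg) ?_
  filter_upwards [ae_restrict_mem measurableSet_Ioi] with t ht
  exact abs_exp_neg_mul_mul_le (hbound t (le_of_lt ht))

theorem tendsto_exp_neg_mul_mul_of_abs_le (hbound : ∀ t ≥ 0, |g t| ≤ M * exp (c * t))
    (hcs : c < s) : Tendsto (fun t => exp (-s * t) * g t) atTop (𝓝 0) := by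
  have hdecay : Tendsto (fun t => M * exp (-(s - c) * t)) atTop (𝓝 0) := by
    simpa using (tendsto_exp_atBot.comp
      (tendsto_id.const_mul_atTop_of_neg (neg_neg_of_pos (sub_pos.2 hcs)))).const_mul M
  refine squeeze_zero_norm' ?_ hdecay
  filter_upwards [eventually_ge_atTop 0] with t ht
  exact abs_exp_neg_mul_mul_le (hbound t ht)

end ExponentialOrder

theorem laplace_const_mul (a : ℝ) (g : ℝ → ℝ) (s : ℝ) :
    laplace (fun t => a * g t) s = a * laplace g s := by
  simp only [laplace, ← integral_const_mul, mul_left_comm]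

theorem laplace_cos_mul (K : ℝ) {s : ℝ} (hs : 0 < s) :
    laplace (fun t => cos (K * t)) s = s / (s ^ 2 + K ^ 2) := by
  set a : ℂ := (-s : ℝ) + K * Complex.I
  have ha_re : a.re = -s := by simp [a]
  have ha : a.re < 0 := by linarith
  have hre : ∀ t : ℝ, exp (-s * t) * cos (K * t) = RCLike.re (Complex.exp (a * t)) := by
    intro t
    rw [RCLike.re_to_complex, Complex.exp_re]
    simp [a]
  have hnormSq : Complex.normSq a = s ^ 2 + K ^ 2 := by
    rw [Complex.normSq_add_mul_I, neg_sq]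
  simp only [laplace, hre]
  rw [integral_re (integrableOn_exp_mul_complex_Ioi ha 0), integral_exp_mul_complex_Ioi ha 0]
  simp [div_eq_mul_inv, Complex.inv_re, hnormSq, ha_re]

theorem laplace_deriv {f f' : ℝ → ℝ} {s : ℝ} (hf : ∀ t ∈ Ici (0:ℝ), HasDerivAt f (f' t) t)
    (hf_int : IntegrableOn (fun t => exp (-s * t) * f t) (Ioi 0))
    (hf'_int : IntegrableOn (fun t => exp (-s * t) * f' t) (Ioi 0))
    (hlim : Tendsto (fun t => exp (-s * t) * f t) atTop (𝓝 0)) :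
    laplace f' s = s * laplace f s - f 0 := by
  have hderiv : ∀ t ∈ Ici (0:ℝ), HasDerivAt (fun t => exp (-s * t) * f t)
      (exp (-s * t) * f' t - s * (exp (-s * t) * f t)) t := by
    intro t ht
    have hexp : HasDerivAt (fun t => exp (-s * t)) (exp (-s * t) * -s) t := by
      simpa using ((hasDerivAt_id t).const_mul (-s)).exp
    exact (hexp.mul (hf t ht)).congr_deriv (by ring)
  have hFTC := integral_Ioi_of_hasDerivAt_of_tendsto' hderiv
    (hf'_int.sub (hf_int.const_mul s)) hlim
  rw [integral_sub hf'_int (hf_int.const_mul s), integral_const_mul] at hFTC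
  simp only [mul_zero, exp_zero, one_mul, zero_sub] at hFTC
  rw [laplace, laplace]
  linarith

section Convolution

variable (g h : ℝ → ℝ) (s : ℝ)

lemma indicator_mul_indicator_sub (t τ : ℝ) :
    (Ioi 0).indicator (fun u => exp (-s * u) * g u) (t - τ)
        * (Ioi 0).indicator (fun u => exp (-s * u) * h u) τ
      = (Ioo 0 t).indicator (fun τ => exp (-s * t) * (g (t - τ) * h τ)) τ := by
  by_cases hτ : τ ∈ Ioo 0 t
  · have hpos : t - τ ∈ Ioi (0:ℝ) := sub_pos.2 hτ.2
    rw [indicator_of_mem hpos, indicator_of_mem (mem_Ioi.2 hτ.1), indicator_of_mem hτ,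
      show -s * t = -s * (t - τ) + -s * τ by ring, exp_add]
    ring
  · rw [indicator_of_notMem hτ]
    rcases not_and_or.1 hτ with hτ0 | hτt
    · rw [indicator_of_notMem (show τ ∉ Ioi 0 from hτ0), mul_zero]
    · rw [indicator_of_notMem (show t - τ ∉ Ioi 0 by simpa using hτt), zero_mul]

lemma integral_indicator_mul_indicator_sub (t : ℝ) :
    ∫ τ, (Ioi 0).indicator (fun u => exp (-s * u) * g u) (t - τ)
        * (Ioi 0).indicator (fun u => exp (-s * u) * h u) τ
      = (Ioi 0).indicator (fun t => exp (-s * t) * ∫ τ in (0:ℝ)..t, g (t - τ) * h τ) t := by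
  simp only [indicator_mul_indicator_sub, integral_indicator measurableSet_Ioo]
  rcases lt_or_ge 0 t with ht | ht
  · rw [indicator_of_mem (mem_Ioi.2 ht), intervalIntegral.integral_of_le ht.le,
      integral_Ioc_eq_integral_Ioo, integral_const_mul]
  · rw [indicator_of_notMem (notMem_Ioi.2 ht), Ioo_eq_empty (not_lt.2 ht),
      Measure.restrict_empty, integral_zero_measure]

theorem laplace_convolution
    (hg : IntegrableOn (fun t => exp (-s * t) * g t) (Ioi 0))
    (hh : IntegrableOn (fun t => exp (-s * t) * h t) (Ioi 0)) :
    laplace (fun t => ∫ τ in (0:ℝ)..t, g (t - τ) * h τ) s = laplace g s * laplace h s := by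
  set G := (Ioi 0).indicator (fun u => exp (-s * u) * g u)
  set H := (Ioi 0).indicator (fun u => exp (-s * u) * h u)
  have hGH : Integrable (fun z : ℝ × ℝ => G z.1 * H z.2) (volume.prod volume) :=
    ((integrable_indicator_iff measurableSet_Ioi).2 hg).mul_prod
      ((integrable_indicator_iff measurableSet_Ioi).2 hh)
  -- the shear `(t, τ) ↦ (t - τ, τ)` carries the convolution integrand to a product
  have hconv : Integrable (fun z : ℝ × ℝ => G (z.1 - z.2) * H z.2) (volume.prod volume) :=
    (measurePreserving_sub_prod volume volume).integrable_comp_of_integrable hGH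
  calc laplace (fun t => ∫ τ in (0:ℝ)..t, g (t - τ) * h τ) s
      = ∫ t, ∫ τ, G (t - τ) * H τ := by
        simp only [G, H, integral_indicator_mul_indicator_sub, laplace,
          integral_indicator measurableSet_Ioi]
    _ = ∫ τ, ∫ t, G (t - τ) * H τ := integral_integral_swap hconv
    _ = ∫ τ, (∫ u, G u) * H τ := by
        simp only [integral_mul_const, integral_sub_right_eq_self (fun u => G u)]
    _ = laplace g s * laplace h s := by
        rw [integral_const_mul, integral_indicator measurableSet_Ioi,
          integral_indicator measurableSet_Ioi, laplace, laplace]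

end Convolution

theorem laplace_DC_general (α N : ℝ) (hα1 : α < 1)
    (f : ℝ → ℝ) (hf : ContDiff ℝ 1 f)
    (M c : ℝ) (hexp : ∀ t ≥ 0, |f t| ≤ M * Real.exp (c * t))
    (hexp' : ∀ t ≥ 0, |deriv f t| ≤ M * Real.exp (c * t))
    (s : ℝ) (hs : 0 < s) (hsc : c < s) :
    laplace (DCop N α f) s
      = (s * (1 - α) * N / ((1 - α)^2 * s^2 + α^2)) * (s * laplace f s - f 0) := by
  have hfd : Differentiable ℝ f := hf.differentiable one_ne_zero
  have hcos : IntegrableOn (fun t => exp (-s * t) * cos (α / (1 - α) * t)) (Ioi 0) :=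
    integrableOn_exp_neg_mul_mul_of_abs_le (M := 1) (c := 0)
      (continuous_cos.comp (continuous_const_mul _)).aestronglyMeasurable
      (fun t _ => by simpa using abs_cos_le_one (α / (1 - α) * t)) hs
  have hf' : IntegrableOn (fun t => exp (-s * t) * deriv f t) (Ioi 0) :=
    integrableOn_exp_neg_mul_mul_of_abs_le
      (hf.continuous_deriv le_rfl).aestronglyMeasurable hexp' hsc
  have hLf' : laplace (deriv f) s = s * laplace f s - f 0 :=
    laplace_deriv (fun t _ => (hfd t).hasDerivAt)
      (integrableOn_exp_neg_mul_mul_of_abs_le hfd.continuous.aestronglyMeasurable hexp hsc) hf'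
      (tendsto_exp_neg_mul_mul_of_abs_le hexp hsc)
  have h1α : 1 - α ≠ 0 := (sub_pos.2 hα1).ne'
  calc laplace (DCop N α f) s
      = N / (1 - α) * (laplace (fun t => cos (α / (1 - α) * t)) s * laplace (deriv f) s) := by
        rw [← laplace_convolution _ _ _ hcos hf', ← laplace_const_mul]
        rfl
    _ = _ := by
        rw [laplace_cos_mul _ hs, hLf']
        field_simp

theorem laplace_DC (α N : ℝ) (hα : 0 < α) (hα1 : α < 1)
    (f : ℝ → ℝ) (hf : ContDiff ℝ 1 f)
    (M c : ℝ) (hexp : ∀ t ≥ 0, |f t| ≤ M * Real.exp (c * t))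
    (hexp' : ∀ t ≥ 0, |deriv f t| ≤ M * Real.exp (c * t))
    (s : ℝ) (hs : 0 < s) (hsc : c < s) :
    laplace (DCop N α f) s
      = (s * (1 - α) * N / ((1 - α)^2 * s^2 + α^2)) * (s * laplace f s - f 0) :=
  laplace_DC_general α N hα1 f hf M c hexp hexp' s hs hsc
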